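/- arXiv:2012.02345 — 2 statements merged into one kernel-verified Lean document; each statement's English description precedes it below -/
import Mathlib

section
/- The function u : ℝ → ℝ with u(x) = 0 for -1 ≤ x ≤ 1 and u(x) = -1 otherwise is m-quasiconvex but not quasiconvex. -/
theorem stmt_8 :
    (∀ x₁ x₂ α : ℝ, 0 ≤ α → α ≤ 1 →
      |(fun x : ℝ => if -1 ≤ x ∧ x ≤ 1 then (0 : ℝ) else -1) (α * x₁ + (1 - α) * x₂)| ≤
        max |(fun x : ℝ => if -1 ≤ x ∧ x ≤ 1 then (0 : ℝ) else -1) x₁|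
            |(fun x : ℝ => if -1 ≤ x ∧ x ≤ 1 then (0 : ℝ) else -1) x₂|) ∧
    ¬ (∀ x₁ x₂ α : ℝ, 0 ≤ α → α ≤ 1 →
      (fun x : ℝ => if -1 ≤ x ∧ x ≤ 1 then (0 : ℝ) else -1) (α * x₁ + (1 - α) * x₂) ≤
        max ((fun x : ℝ => if -1 ≤ x ∧ x ≤ 1 then (0 : ℝ) else -1) x₁)
            ((fun x : ℝ => if -1 ≤ x ∧ x ≤ 1 then (0 : ℝ) else -1) x₂)) := by
  constructor
  · intro x₁ x₂ α h0 h1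
    simp only
    by_cases hc : -1 ≤ α * x₁ + (1 - α) * x₂ ∧ α * x₁ + (1 - α) * x₂ ≤ 1
    · simp [hc]
    · rw [if_neg hc]
      by_cases h1' : -1 ≤ x₁ ∧ x₁ ≤ 1
      · by_cases h2' : -1 ≤ x₂ ∧ x₂ ≤ 1
        · exfalso; apply hc
          constructor <;> nlinarith [h1'.1, h1'.2, h2'.1, h2'.2]
        · rw [if_neg h2']; simp
      · rw [if_neg h1']; simp
  · intro h
    have := h (-2) 2 (1/2) (by norm_num) (by norm_num)
    norm_num at this
end

section
/- Let (X, τ) be a Hausdorff topological vector space, C ⊆ X a nonempty compact convex subset, f : C → C a continuous map, u₁,...,uₘ : X → ℝ continuous originally m-quasiconvex functionals, and δ > 0. If max₁≤k≤m |u_k(x - f(x))| ≥ δ for every x ∈ C, then the set-valued map F(x) = {z ∈ C : max₁≤k≤m |u_k(x - f(z))| ≥ δ} is a KKM map with nonempty closed values; i.e., for any x₁,...,xₙ ∈ C, conv{x₁,...,xₙ} ⊆ ⋃ᵢ F(xᵢ). -/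
/-! If `z ∈ conv {x₁, …, xₙ}` lay in no `F(xᵢ)`, then the strict sublevel set
`{w ∈ C | Φ (w - f z) < δ}` of the quasiconvex function `Φ = maxₖ |uₖ|` would be a convex set
containing every `xᵢ`, hence `z`, contradicting `δ ≤ Φ (z - f z)`. Closedness of `F(x)` is
continuity of `z ↦ Φ (x - f z)` on the closed set `C`. -/

open Set

section Quasiconvex

variable {𝕜 E β : Type*}

theorem quasiconvexOn_univ_of_le_max [Ring 𝕜] [PartialOrder 𝕜] [IsOrderedRing 𝕜]
    [AddCommMonoid E] [SMul 𝕜 E] [LinearOrder β] {g : E → β}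
    (h : ∀ y₁ y₂ : E, ∀ α : 𝕜, 0 ≤ α → α ≤ 1 → g (α • y₁ + (1 - α) • y₂) ≤ max (g y₁) (g y₂)) :
    QuasiconvexOn 𝕜 univ g := by
  refine quasiconvexOn_iff_le_max.mpr ⟨convex_univ, fun x _ y _ a b ha hb hab => ?_⟩
  obtain rfl : b = 1 - a := eq_sub_of_add_eq' hab
  exact h x y a ha (sub_nonneg.mp hb)

theorem QuasiconvexOn.comp_sub_const [Ring 𝕜] [PartialOrder 𝕜] [AddCommGroup E] [Module 𝕜 E]
    [LinearOrder β] {g : E → β} (hg : QuasiconvexOn 𝕜 univ g) (c : E) :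
    QuasiconvexOn 𝕜 univ (fun w => g (w - c)) := by
  refine quasiconvexOn_iff_le_max.mpr ⟨convex_univ, fun x _ y _ a b ha hb hab => ?_⟩
  have hshift : a • x + b • y - c = a • (x - c) + b • (y - c) := by
    rw [smul_sub, smul_sub, ← add_sub_add_comm, ← add_smul, hab, one_smul]
  rw [hshift]
  exact (quasiconvexOn_iff_le_max.mp hg).2 trivial trivial ha hb hab

theorem QuasiconvexOn.subset [Semiring 𝕜] [PartialOrder 𝕜] [AddCommMonoid E] [SMul 𝕜 E]
    [LE β] {s t : Set E} {g : E → β} (hg : QuasiconvexOn 𝕜 t g) (hst : s ⊆ t)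
    (hs : Convex 𝕜 s) : QuasiconvexOn 𝕜 s g := by
  intro r
  have hsep : {x ∈ s | g x ≤ r} = s ∩ {x ∈ t | g x ≤ r} := by
    ext x
    exact ⟨fun hx => ⟨hx.1, hst hx.1, hx.2⟩, fun hx => ⟨hx.1, hx.2.2⟩⟩
  rw [hsep]
  exact hs.inter (hg r)

theorem QuasiconvexOn.finset_sup' [Semiring 𝕜] [PartialOrder 𝕜] [AddCommMonoid E] [SMul 𝕜 E]
    [SemilatticeSup β] {ι : Type*} {s : Finset ι} (hs : s.Nonempty) {t : Set E} {g : ι → E → β}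
    (hg : ∀ i ∈ s, QuasiconvexOn 𝕜 t (g i)) :
    QuasiconvexOn 𝕜 t (fun x => s.sup' hs (g · x)) := by
  intro r x hx y hy a b ha hb hab
  obtain ⟨i₀, hi₀⟩ := hs
  refine ⟨((hg i₀ hi₀ r) ⟨hx.1, ?_⟩ ⟨hy.1, ?_⟩ ha hb hab).1, Finset.sup'_le _ _ fun i hi => ?_⟩
  · exact (Finset.le_sup' (g · x) hi₀).trans hx.2
  · exact (Finset.le_sup' (g · y) hi₀).trans hy.2
  · exact ((hg i hi r) ⟨hx.1, (Finset.le_sup' (g · x) hi).trans hx.2⟩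
      ⟨hy.1, (Finset.le_sup' (g · y) hi).trans hy.2⟩ ha hb hab).2

end Quasiconvex

theorem convexHull_subset_iUnion_of_quasiconvexOn {𝕜 E β ι : Type*} [Semiring 𝕜] [PartialOrder 𝕜]
    [AddCommMonoid E] [Module 𝕜 E] [LinearOrder β] {C : Set E} (hC : Convex 𝕜 C)
    {G : E → E → β} (hG : ∀ z ∈ C, QuasiconvexOn 𝕜 C (G · z)) {δ : β}
    (hdiag : ∀ z ∈ C, δ ≤ G z z) (x : ι → E) (hx : ∀ i, x i ∈ C) :
    convexHull 𝕜 (range x) ⊆ ⋃ i, {z ∈ C | δ ≤ G (x i) z} := by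
  intro z hz
  have hzC : z ∈ C := convexHull_min (range_subset_iff.mpr hx) hC hz
  by_contra hnot
  simp only [mem_iUnion, mem_ofPred_eq, not_exists, not_and, not_le] at hnot
  have hsub : range x ⊆ {w ∈ C | G w z < δ} :=
    range_subset_iff.mpr fun i => ⟨hx i, hnot i hzC⟩
  have hlt : G z z < δ := (convexHull_min hsub ((hG z hzC).convex_lt δ) hz).2
  exact (hdiag z hzC).not_gt hlt

theorem stmt_17_general {X : Type*} [AddCommGroup X] [Module ℝ X] [TopologicalSpace X]
    [IsTopologicalAddGroup X] [T2Space X]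
    (C : Set X) (hCcp : IsCompact C) (hCcv : Convex ℝ C)
    (f : X → X) (hf : ContinuousOn f C)
    (m : ℕ) (hm : 0 < m) (u : Fin m → X → ℝ)
    (hu_cont : ∀ k, Continuous (u k))
    (hu_mq : ∀ k, ∀ y₁ y₂ : X, ∀ α : ℝ, 0 ≤ α → α ≤ 1 →
      |u k (α • y₁ + (1 - α) • y₂)| ≤ max |u k y₁| |u k y₂|)
    (δ : ℝ)
    (hbig : ∀ x ∈ C,
      δ ≤ Finset.univ.sup' (Finset.univ_nonempty_iff.mpr (Fin.pos_iff_nonempty.mp hm))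
            (fun k => |u k (x - f x)|)) :
    (∀ x ∈ C,
      ({z ∈ C | δ ≤ Finset.univ.sup'
          (Finset.univ_nonempty_iff.mpr (Fin.pos_iff_nonempty.mp hm))
          (fun k => |u k (x - f z)|)} : Set X).Nonempty ∧
      IsClosed {z ∈ C | δ ≤ Finset.univ.sup'
          (Finset.univ_nonempty_iff.mpr (Fin.pos_iff_nonempty.mp hm))
          (fun k => |u k (x - f z)|)}) ∧
    (∀ (n : ℕ) (x : Fin n → X), (∀ i, x i ∈ C) →
      convexHull ℝ (Set.range x) ⊆
        ⋃ i, {z ∈ C | δ ≤ Finset.univ.sup'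
          (Finset.univ_nonempty_iff.mpr (Fin.pos_iff_nonempty.mp hm))
          (fun k => |u k (x i - f z)|)}) := by
  have hne : (Finset.univ : Finset (Fin m)).Nonempty :=
    Finset.univ_nonempty_iff.mpr (Fin.pos_iff_nonempty.mp hm)
  set Φ : X → ℝ := fun y => Finset.univ.sup' hne fun k => |u k y|
  have hΦ_qc : QuasiconvexOn ℝ univ Φ :=
    QuasiconvexOn.finset_sup' hne fun k _ => quasiconvexOn_univ_of_le_max (hu_mq k)
  have hΦ_cont : Continuous Φ := Continuous.finset_sup'_apply hne fun k _ => (hu_cont k).abs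
  refine ⟨fun x hx => ⟨⟨x, hx, hbig x hx⟩, ?_⟩, fun n x hx => ?_⟩
  · exact (hΦ_cont.comp_continuousOn (continuousOn_const.sub hf)).preimage_isClosed_of_isClosed
      hCcp.isClosed isClosed_Ici
  · exact convexHull_subset_iUnion_of_quasiconvexOn hCcv
      (fun z _ => (hΦ_qc.comp_sub_const (f z)).subset (subset_univ C) hCcv) hbig x hx

theorem stmt_17 {X : Type*} [AddCommGroup X] [Module ℝ X] [TopologicalSpace X]
    [IsTopologicalAddGroup X] [ContinuousSMul ℝ X] [T2Space X]
    (C : Set X) (hCne : C.Nonempty) (hCcp : IsCompact C) (hCcv : Convex ℝ C)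
    (f : X → X) (hf : ContinuousOn f C) (hfC : Set.MapsTo f C C)
    (m : ℕ) (hm : 0 < m) (u : Fin m → X → ℝ)
    (hu_cont : ∀ k, Continuous (u k))
    (hu_orig : ∀ k, u k 0 = 0)
    (hu_mq : ∀ k, ∀ y₁ y₂ : X, ∀ α : ℝ, 0 ≤ α → α ≤ 1 →
      |u k (α • y₁ + (1 - α) • y₂)| ≤ max |u k y₁| |u k y₂|)
    (δ : ℝ) (hδ : 0 < δ)
    (hbig : ∀ x ∈ C,
      δ ≤ Finset.univ.sup' (Finset.univ_nonempty_iff.mpr (Fin.pos_iff_nonempty.mp hm))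
            (fun k => |u k (x - f x)|)) :
    (∀ x ∈ C,
      ({z ∈ C | δ ≤ Finset.univ.sup'
          (Finset.univ_nonempty_iff.mpr (Fin.pos_iff_nonempty.mp hm))
          (fun k => |u k (x - f z)|)} : Set X).Nonempty ∧
      IsClosed {z ∈ C | δ ≤ Finset.univ.sup'
          (Finset.univ_nonempty_iff.mpr (Fin.pos_iff_nonempty.mp hm))
          (fun k => |u k (x - f z)|)}) ∧
    (∀ (n : ℕ) (x : Fin n → X), (∀ i, x i ∈ C) →
      convexHull ℝ (Set.range x) ⊆
        ⋃ i, {z ∈ C | δ ≤ Finset.univ.sup'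
          (Finset.univ_nonempty_iff.mpr (Fin.pos_iff_nonempty.mp hm))
          (fun k => |u k (x i - f z)|)}) :=
  stmt_17_general C hCcp hCcv f hf m hm u hu_cont hu_mq δ hbig
end
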